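/- The purity of a state ρ on a d_A-dimensional system is at most log d_A − H(ρ): for any unitary U : H_{A^n} → H_{A_p} ⊗ H_{A_g} such that σ = U ρ^{⊗n} U† has ‖σ^{A_p} − |0⟩⟨0|‖₁ ≤ ε, it holds that (1/n)·log dim H_{A_p} ≤ log d_A − H(ρ) + 1/(en) + ε·log d_A. -/

import Mathlib

open Matrix Kronecker BigOperators ComplexOrder

/-- Trace norm `‖A‖₁ = Tr √(Aᴴ A)`. -/
noncomputable def traceNorm {n : Type*} [Fintype n] [DecidableEq n]
    (A : Matrix n n ℂ) : ℝ :=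
  (((Matrix.isHermitian_conjTranspose_mul_self A).eigenvectorUnitary : Matrix n n ℂ) *
      Matrix.diagonal ((fun x : ℝ => (x : ℂ)) ∘ (Real.sqrt ∘ (Matrix.isHermitian_conjTranspose_mul_self A).eigenvalues)) *
      (star (Matrix.isHermitian_conjTranspose_mul_self A).eigenvectorUnitary : Matrix n n ℂ)).trace.re

/-- Von Neumann entropy (base 2), via eigenvalues; `0` for non-Hermitian input. -/
noncomputable def vnEntropy {n : Type*} [Fintype n] [DecidableEq n]
    (ρ : Matrix n n ℂ) : ℝ :=
  if h : ρ.IsHermitian then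
    -∑ i, (h.eigenvalues i) * Real.logb 2 (h.eigenvalues i)
  else 0

/-- A density operator: positive semidefinite with unit trace. -/
def IsDensity {n : Type*} [Fintype n] (ρ : Matrix n n ℂ) : Prop :=
  ρ.PosSemidef ∧ ρ.trace = 1

/-- Rank-one projector `|v⟩⟨v|`. -/
noncomputable def proj {n : Type*} (v : n → ℂ) : Matrix n n ℂ :=
  Matrix.vecMulVec v (star v)

/-- Partial trace over the second tensor factor. -/
noncomputable def ptraceSnd {a b : Type*} [Fintype b]
    (ρ : Matrix (a × b) (a × b) ℂ) : Matrix a a ℂ :=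
  Matrix.of fun i j => ∑ k, ρ (i, k) (j, k)

/-- Partial trace over the first tensor factor. -/
noncomputable def ptraceFst {a b : Type*} [Fintype a]
    (ρ : Matrix (a × b) (a × b) ℂ) : Matrix b b ℂ :=
  Matrix.of fun i j => ∑ k, ρ (k, i) (k, j)

/-- Quantum mutual information `I(A;B) = H(A) + H(B) − H(AB)`. -/
noncomputable def mutualInfo {a b : Type*} [Fintype a] [Fintype b]
    [DecidableEq a] [DecidableEq b] (ρ : Matrix (a × b) (a × b) ℂ) : ℝ :=
  vnEntropy (ptraceSnd ρ) + vnEntropy (ptraceFst ρ) - vnEntropy ρ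

/-- `n`-fold tensor power of a matrix. -/
noncomputable def tpow {d : ℕ} (ρ : Matrix (Fin d) (Fin d) ℂ) (n : ℕ) :
    Matrix (Fin n → Fin d) (Fin n → Fin d) ℂ :=
  Matrix.of fun f g => ∏ i, ρ (f i) (g i)

/-- The cq state obtained by measuring the `A` part of a bipartite state with POVM `Λ`:
`ρ^{XB} = Σ_x |x⟩⟨x| ⊗ Tr_A((Λ_x ⊗ I)ρ)`. -/
noncomputable def measureA {a b m : Type*} [Fintype a] [DecidableEq m]
    (Λ : m → Matrix a a ℂ) (ρ : Matrix (a × b) (a × b) ℂ) :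
    Matrix (m × b) (m × b) ℂ :=
  Matrix.of fun xi yj =>
    if xi.1 = yj.1 then ∑ k, ∑ l, (Λ xi.1) k l * ρ (l, xi.2) (k, yj.2) else 0

/-- Unitarity for (possibly rectangular between index types) matrices. -/
def IsUnitaryMat {p q : Type*} [Fintype p] [Fintype q] [DecidableEq p] [DecidableEq q]
    (U : Matrix p q ℂ) : Prop :=
  U * Uᴴ = 1 ∧ Uᴴ * U = 1

/-!
Diagonalise `ρ^{⊗n} = V diag(q) V†`, where `q` is the product distribution of the eigenvalues of
`ρ`, so that `H(q) = n H(ρ)`. The projector `Π = U† (|v⟩⟨v| ⊗ 1) U` has rank `g = dim A_g`, hence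
its diagonal `c` in the eigenbasis of `ρ^{⊗n}` satisfies `0 ≤ c ≤ 1` and `∑ c = g`, while
`Tr(Π ρ^{⊗n}) = ∑ q c ≥ 1 - ε/2` by the trace-norm hypothesis. A Fano-type estimate then gives
`H(q) ≤ log g + 1/4 + ε log p`; as `p g = d_A^n`, this is
`log p ≤ n (log d_A - H(ρ)) + 1/4 + ε n log d_A` in nats, and `1/4 ≤ (log 2)/e` turns the
constant into the `1/(e n)` of the statement in bits.
-/

namespace Real

lemma negMulLog_le_neg_mul_log_add_sub {x y : ℝ} (hx : 0 ≤ x) (hy : 0 < y) :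
    negMulLog x ≤ -x * log y + y - x := by
  rcases hx.eq_or_lt with rfl | hx
  · simpa using hy.le
  have key : x * log (y / x) ≤ y - x := by
    have := mul_le_mul_of_nonneg_left (log_le_sub_one_of_pos (div_pos hy hx)) hx.le
    rwa [mul_sub, mul_div_cancel₀ _ hx.ne', mul_one] at this
  rw [log_div hy.ne' hx.ne'] at key
  rw [negMulLog]
  linarith

lemma sum_mul_negMulLog_le {ι : Type*} [Fintype ι] {c q : ι → ℝ} (hc : ∀ i, 0 ≤ c i)
    (hq : ∀ i, 0 ≤ q i) :
    ∑ i, c i * negMulLog (q i) ≤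
      (∑ i, c i * q i) * log (∑ i, c i) + negMulLog (∑ i, c i * q i) := by
  have hcq : ∀ i ∈ Finset.univ, 0 ≤ c i * q i := fun i _ => mul_nonneg (hc i) (hq i)
  rcases (Finset.sum_nonneg hcq).eq_or_lt with ha | ha
  · rw [← ha, zero_mul, zero_add, negMulLog_zero]
    refine (Finset.sum_eq_zero fun i hi => ?_).le
    rcases mul_eq_zero.mp ((Finset.sum_eq_zero_iff_of_nonneg hcq).mp ha.symm i hi) with h | h <;>
      simp [h]
  set a := ∑ i, c i * q i
  set C := ∑ i, c i
  have hC : 0 < C := by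
    obtain ⟨i, hi, hne⟩ := Finset.exists_ne_zero_of_sum_ne_zero ha.ne'
    exact ((hc i).lt_of_ne (left_ne_zero_of_mul hne).symm).trans_le
      (Finset.single_le_sum (fun j _ => hc j) hi)
  calc ∑ i, c i * negMulLog (q i)
      ≤ ∑ i, c i * (-q i * log (a / C) + a / C - q i) :=
        Finset.sum_le_sum fun i _ => mul_le_mul_of_nonneg_left
          (negMulLog_le_neg_mul_log_add_sub (hq i) (div_pos ha hC)) (hc i)
    _ = -log (a / C) * a + a / C * C - a := by
        rw [← Finset.sum_congr rfl fun i _ => (by ring :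
          -log (a / C) * (c i * q i) + a / C * c i - c i * q i =
            c i * (-q i * log (a / C) + a / C - q i)),
          Finset.sum_sub_distrib, Finset.sum_add_distrib, ← Finset.mul_sum, ← Finset.mul_sum]
    _ = a * log C + negMulLog a := by
        rw [log_div ha.ne' hC.ne', div_mul_cancel₀ _ hC.ne', negMulLog]
        ring

lemma binEntropy_le_quarter_add_mul_log_four {b : ℝ} (hb₀ : 0 ≤ b) (hb₁ : b ≤ 1) :
    binEntropy b ≤ 1 / 4 + b * log 4 := by
  have h₁ := negMulLog_le_neg_mul_log_add_sub hb₀ (by norm_num : (0 : ℝ) < 1 / 4)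
  have h₂ := negMulLog_le_one_sub_self (sub_nonneg.mpr hb₁)
  rw [one_div, log_inv] at h₁
  rw [binEntropy_eq_negMulLog_add_negMulLog_one_sub]
  linarith

lemma log_four_mul_sub_one_le_two_mul_log {x : ℝ} (hx : 1 < x) :
    log (4 * (x - 1)) ≤ 2 * log x := by
  rw [← log_rpow (by linarith), rpow_two]
  exact log_le_log (by linarith) (by nlinarith [sq_nonneg (x - 2)])

/-- A Fano-type inequality: `1 - ∑ cᵢ qᵢ` plays the role of the error probability. -/
lemma sum_negMulLog_le_of_weights {ι : Type*} [Fintype ι] {p g : ℕ}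
    (hcard : Fintype.card ι = p * g) {q c : ι → ℝ} (hq₀ : ∀ i, 0 ≤ q i) (hq₁ : ∑ i, q i = 1)
    (hc₀ : ∀ i, 0 ≤ c i) (hc₁ : ∀ i, c i ≤ 1) (hc : ∑ i, c i = g) :
    ∑ i, negMulLog (q i) ≤ log g + 1 / 4 + 2 * (1 - ∑ i, c i * q i) * log p := by
  set a := ∑ i, c i * q i
  set b := ∑ i, (1 - c i) * q i
  have hab : b = 1 - a := by
    simp only [b, a, sub_mul, one_mul, Finset.sum_sub_distrib, hq₁]
  have ha₀ : 0 ≤ a := Finset.sum_nonneg fun i _ => mul_nonneg (hc₀ i) (hq₀ i)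
  have hb₀ : 0 ≤ b := Finset.sum_nonneg fun i _ => mul_nonneg (sub_nonneg.mpr (hc₁ i)) (hq₀ i)
  obtain ⟨hp, hg⟩ : p ≠ 0 ∧ g ≠ 0 := by
    rw [← mul_ne_zero_iff, ← hcard]
    rintro h
    simp [Fintype.card_eq_zero_iff.mp h] at hq₁
  obtain rfl | hp : p = 1 ∨ 1 < p := by omega
  · have := sum_mul_negMulLog_le (fun _ => zero_le_one) hq₀
    simp only [one_mul, hq₁, Finset.sum_const, Finset.card_univ, hcard, nsmul_eq_mul, mul_one,
      negMulLog_one, add_zero] at this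
    simp only [Nat.cast_one, log_one, mul_zero, add_zero]
    linarith
  have hp' : (1 : ℝ) < p := by exact_mod_cast hp
  have hsum : ∑ i, (1 - c i) = g * (p - 1) := by
    rw [Finset.sum_sub_distrib, hc, Finset.sum_const, Finset.card_univ, hcard]
    ring
  have hA : ∑ i, c i * negMulLog (q i) ≤ a * log g + negMulLog a :=
    hc ▸ sum_mul_negMulLog_le hc₀ hq₀
  have hB : ∑ i, (1 - c i) * negMulLog (q i) ≤ b * (log g + log (p - 1)) + negMulLog b := by
    rw [← log_mul (by positivity) (by linarith), ← hsum]
    exact sum_mul_negMulLog_le (fun i => sub_nonneg.mpr (hc₁ i)) hq₀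
  have hbin := binEntropy_le_quarter_add_mul_log_four hb₀ (by linarith)
  rw [binEntropy_eq_negMulLog_add_negMulLog_one_sub, hab, sub_sub_cancel, ← hab] at hbin
  have hlog := mul_le_mul_of_nonneg_left (log_four_mul_sub_one_le_two_mul_log hp') hb₀
  rw [log_mul (by norm_num) (by linarith)] at hlog
  have hsplit : ∑ i, negMulLog (q i) =
      ∑ i, c i * negMulLog (q i) + ∑ i, (1 - c i) * negMulLog (q i) := by
    rw [← Finset.sum_add_distrib]
    exact Finset.sum_congr rfl fun i _ => by ring
  have hlogg : a * log g + b * log g = log g := by rw [← add_mul, hab]; ring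
  rw [hsplit, ← hab]
  linarith [mul_add b (log g) (log (p - 1)), mul_add b (log 4) (log (p - 1))]

section ProductDistribution
variable {α : Type*} [Fintype α] {lam : α → ℝ}

lemma sum_prod_eq_one (h : ∑ a, lam a = 1) (n : ℕ) :
    ∑ f : Fin n → α, ∏ i, lam (f i) = 1 := by
  rw [← Fintype.piFinset_univ, ← Finset.sum_pow', h, one_pow]

lemma sum_negMulLog_prod (h : ∑ a, lam a = 1) (n : ℕ) :
    ∑ f : Fin n → α, negMulLog (∏ i, lam (f i)) = n * ∑ a, negMulLog (lam a) := by
  induction n with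
  | zero => simp
  | succ n ih =>
    rw [← (Fin.consEquiv fun _ => α).sum_comp, Fintype.sum_prod_type]
    simp only [Fin.consEquiv_apply, Fin.prod_univ_succ, Fin.cons_zero, Fin.cons_succ,
      negMulLog_mul, Finset.sum_add_distrib, ← Finset.sum_mul, ← Finset.mul_sum,
      sum_prod_eq_one h, ih, h]
    push_cast
    ring

end ProductDistribution

end Real

namespace Matrix
variable {m k : Type*} [Fintype m] [Fintype k]

lemma IsStarProjection.re_diag_nonneg {T : Matrix m m ℂ} (hT : IsStarProjection T) (i : m) :
    0 ≤ (T i i).re := by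
  have hpsd : T.PosSemidef := by
    convert posSemidef_conjTranspose_mul_self T using 1
    rw [← star_eq_conjTranspose, hT.isSelfAdjoint.star_eq, hT.isIdempotentElem.eq]
  exact (Complex.nonneg_iff.mp hpsd.diag_nonneg).1

lemma IsStarProjection.re_diag_le_one [DecidableEq m] {T : Matrix m m ℂ}
    (hT : IsStarProjection T) (i : m) : (T i i).re ≤ 1 := by
  simpa using hT.one_sub.re_diag_nonneg i

lemma IsStarProjection.conjTranspose_mul_mul [DecidableEq m] {T : Matrix m m ℂ}
    (hT : IsStarProjection T) {B : Matrix m k ℂ} (hB : B * Bᴴ = 1) :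
    IsStarProjection (Bᴴ * T * B) where
  isIdempotentElem := by
    rw [IsIdempotentElem, show Bᴴ * T * B * (Bᴴ * T * B) = Bᴴ * (T * (B * Bᴴ) * T) * B by
      simp only [Matrix.mul_assoc], hB, Matrix.mul_one, hT.isIdempotentElem.eq, Matrix.mul_assoc]
  isSelfAdjoint := by
    rw [IsSelfAdjoint, star_eq_conjTranspose, conjTranspose_mul, conjTranspose_mul,
      conjTranspose_conjTranspose, ← star_eq_conjTranspose T, hT.isSelfAdjoint.star_eq,
      Matrix.mul_assoc]

lemma IsStarProjection.kronecker_one [DecidableEq k] {T : Matrix m m ℂ} (hT : IsStarProjection T) :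
    IsStarProjection (T ⊗ₖ (1 : Matrix k k ℂ)) where
  isIdempotentElem := by
    rw [IsIdempotentElem, ← mul_kronecker_mul, hT.isIdempotentElem.eq, Matrix.mul_one]
  isSelfAdjoint := by
    rw [IsSelfAdjoint, star_eq_conjTranspose, conjTranspose_kronecker, conjTranspose_one,
      ← star_eq_conjTranspose, hT.isSelfAdjoint.star_eq]

lemma isStarProjection_proj {v : m → ℂ} (hv : star v ⬝ᵥ v = 1) : IsStarProjection (proj v) where
  isIdempotentElem := by
    rw [IsIdempotentElem, proj, vecMulVec_mul_vecMulVec, hv, one_smul]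
  isSelfAdjoint := by
    rw [IsSelfAdjoint, star_eq_conjTranspose, proj, conjTranspose_vecMulVec, star_star]

lemma trace_proj (v : m → ℂ) : (proj v).trace = star v ⬝ᵥ v := by
  rw [proj, trace_vecMulVec, dotProduct_comm]

lemma trace_mul_diagonal_mul_conjTranspose_mul [DecidableEq k] (B : Matrix m k ℂ) (d : k → ℂ)
    (M : Matrix m m ℂ) : (B * diagonal d * Bᴴ * M).trace = ∑ j, d j * (Bᴴ * M * B) j j := by
  rw [Matrix.mul_assoc, Matrix.mul_assoc, trace_mul_comm, Matrix.mul_assoc, ← Matrix.mul_assoc,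
    Matrix.mul_assoc]
  simp only [trace, diag, diagonal_mul]

lemma IsHermitian.trace_cfc [DecidableEq m] {A : Matrix m m ℂ} (hA : A.IsHermitian) (f : ℝ → ℝ) :
    (hA.cfc f).trace = ∑ i, (f (hA.eigenvalues i) : ℂ) := by
  rw [IsHermitian.cfc, Unitary.conjStarAlgAut_apply, trace_mul_cycle, Unitary.coe_star_mul_self,
    Matrix.one_mul, trace_diagonal]
  simp

lemma traceNorm_eq_re_trace_cfc_sqrt [DecidableEq m] (A : Matrix m m ℂ) :
    traceNorm A = ((isHermitian_conjTranspose_mul_self A).cfc Real.sqrt).trace.re :=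
  rfl

lemma traceNorm_nonneg [DecidableEq m] (A : Matrix m m ℂ) : 0 ≤ traceNorm A := by
  rw [traceNorm_eq_re_trace_cfc_sqrt, IsHermitian.trace_cfc, Complex.re_sum]
  exact Finset.sum_nonneg fun i _ => by simp [Real.sqrt_nonneg]

lemma IsHermitian.traceNorm_eq_sum_abs_eigenvalues [DecidableEq m] {D : Matrix m m ℂ}
    (hD : D.IsHermitian) : traceNorm D = ∑ i, |hD.eigenvalues i| := by
  rw [traceNorm_eq_re_trace_cfc_sqrt, ← IsHermitian.cfc_eq, hD.eq, ← sq,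
    ← cfc_comp_pow Real.sqrt 2 D (ha := hD.isSelfAdjoint), hD.cfc_eq, hD.trace_cfc]
  simp [Complex.re_sum, Real.sqrt_sq_eq_abs]

lemma IsHermitian.eq_eigenvectorUnitary_mul_diagonal_mul [DecidableEq m] {A : Matrix m m ℂ}
    (hA : A.IsHermitian) :
    A = (hA.eigenvectorUnitary : Matrix m m ℂ) * diagonal (fun i => (hA.eigenvalues i : ℂ)) *
      (hA.eigenvectorUnitary : Matrix m m ℂ)ᴴ := by
  conv_lhs => rw [hA.spectral_theorem, Unitary.conjStarAlgAut_apply]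
  rfl

lemma IsHermitian.eigenvectorUnitary_mul_conjTranspose [DecidableEq m] {A : Matrix m m ℂ}
    (hA : A.IsHermitian) :
    (hA.eigenvectorUnitary : Matrix m m ℂ) * (hA.eigenvectorUnitary : Matrix m m ℂ)ᴴ = 1 :=
  Unitary.coe_mul_star_self _

lemma IsHermitian.neg_traceNorm_div_two_le_re_trace_mul [DecidableEq m] {D P : Matrix m m ℂ}
    (hD : D.IsHermitian) (htr : D.trace = 0) (hP : IsStarProjection P) :
    -(traceNorm D / 2) ≤ (D * P).trace.re := by
  set W := (hD.eigenvectorUnitary : Matrix m m ℂ)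
  set d := hD.eigenvalues
  have hWP : IsStarProjection (Wᴴ * P * W) :=
    hP.conjTranspose_mul_mul hD.eigenvectorUnitary_mul_conjTranspose
  have hsum : ∑ i, d i = 0 := by
    have h := hD.trace_eq_sum_eigenvalues
    rw [htr, ← RCLike.ofReal_sum, eq_comm, RCLike.ofReal_eq_zero] at h
    exact h
  have hDP : (D * P).trace = ∑ i, (d i : ℂ) * (Wᴴ * P * W) i i := by
    conv_lhs => rw [hD.eq_eigenvectorUnitary_mul_diagonal_mul]
    exact trace_mul_diagonal_mul_conjTranspose_mul _ _ _
  have hterm : ∀ i, (d i - |d i|) / 2 ≤ d i * ((Wᴴ * P * W) i i).re := fun i => by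
    have h₀ := hWP.re_diag_nonneg i
    have h₁ := hWP.re_diag_le_one i
    rcases abs_cases (d i) with ⟨h, hd⟩ | ⟨h, hd⟩ <;> rw [h] <;> nlinarith
  rw [hD.traceNorm_eq_sum_abs_eigenvalues, hDP, Complex.re_sum]
  calc -((∑ i, |d i|) / 2) = ∑ i, (d i - |d i|) / 2 := by
        rw [← Finset.sum_div, Finset.sum_sub_distrib, hsum, zero_sub, neg_div]
    _ ≤ ∑ i, d i * ((Wᴴ * P * W) i i).re := Finset.sum_le_sum fun i _ => hterm i
    _ = _ := by simp only [Complex.re_ofReal_mul]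

section PartialTrace
variable {a b : Type*} [Fintype b]

lemma trace_ptraceSnd [Fintype a] (σ : Matrix (a × b) (a × b) ℂ) :
    (ptraceSnd σ).trace = σ.trace := by
  simp only [trace, diag, ptraceSnd, of_apply, Fintype.sum_prod_type]

lemma trace_mul_kronecker_one [Fintype a] [DecidableEq b] (σ : Matrix (a × b) (a × b) ℂ)
    (P : Matrix a a ℂ) :
    (σ * (P ⊗ₖ (1 : Matrix b b ℂ))).trace = (ptraceSnd σ * P).trace := by
  simp only [trace, diag, mul_apply, ptraceSnd, of_apply, Fintype.sum_prod_type, kroneckerMap_apply,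
    one_apply, mul_ite, mul_one, mul_zero, Finset.sum_ite_eq', Finset.mem_univ, if_true,
    Finset.sum_mul]
  exact Finset.sum_congr rfl fun _ _ => Finset.sum_comm

lemma IsHermitian.ptraceSnd {σ : Matrix (a × b) (a × b) ℂ} (hσ : σ.IsHermitian) :
    (ptraceSnd σ).IsHermitian := by
  ext i j
  simp only [conjTranspose_apply, _root_.ptraceSnd, of_apply, star_sum]
  exact Finset.sum_congr rfl fun k _ => congrFun (congrFun hσ (i, k)) (j, k)

lemma one_sub_traceNorm_div_two_le_re_trace_mul_kronecker_one [Fintype a] [DecidableEq a]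
    [DecidableEq b] {σ : Matrix (a × b) (a × b) ℂ} (hσ : σ.IsHermitian) (htr : σ.trace = 1)
    {P : Matrix a a ℂ} (hP : IsStarProjection P) (hPtr : P.trace = 1) :
    1 - traceNorm (ptraceSnd σ - P) / 2 ≤ (σ * (P ⊗ₖ (1 : Matrix b b ℂ))).trace.re := by
  have hD : (ptraceSnd σ - P).IsHermitian := hσ.ptraceSnd.sub hP.isSelfAdjoint
  have htrD : (ptraceSnd σ - P).trace = 0 := by rw [trace_sub, trace_ptraceSnd, htr, hPtr, sub_self]
  have hsplit : ptraceSnd σ * P = (ptraceSnd σ - P) * P + P := by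
    rw [sub_mul, hP.isIdempotentElem.eq, sub_add_cancel]
  rw [trace_mul_kronecker_one, hsplit, trace_add, hPtr, Complex.add_re, Complex.one_re]
  linarith [hD.neg_traceNorm_div_two_le_re_trace_mul htrD hP]

end PartialTrace

end Matrix

section TensorPower
variable {d n : ℕ}

lemma tpow_mul (A B : Matrix (Fin d) (Fin d) ℂ) : tpow A n * tpow B n = tpow (A * B) n := by
  ext f g
  simp only [tpow, mul_apply, of_apply, ← Finset.prod_mul_distrib, Finset.prod_univ_sum,
    Fintype.piFinset_univ]

lemma tpow_one : tpow (1 : Matrix (Fin d) (Fin d) ℂ) n = 1 := by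
  ext f g
  by_cases h : f = g
  · subst h
    simp [tpow]
  · obtain ⟨i, hi⟩ := Function.ne_iff.mp h
    simp only [tpow, of_apply, one_apply_ne h]
    exact Finset.prod_eq_zero (Finset.mem_univ i) (one_apply_ne hi)

lemma conjTranspose_tpow (A : Matrix (Fin d) (Fin d) ℂ) : (tpow A n)ᴴ = tpow Aᴴ n := by
  ext f g
  simp [tpow]

lemma tpow_diagonal (w : Fin d → ℂ) :
    tpow (diagonal w) n = diagonal fun f => ∏ i, w (f i) := by
  ext f g
  by_cases h : f = g
  · subst h
    simp [tpow]
  · obtain ⟨i, hi⟩ := Function.ne_iff.mp h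
    simp only [tpow, of_apply, diagonal_apply_ne _ h]
    exact Finset.prod_eq_zero (Finset.mem_univ i) (diagonal_apply_ne _ hi)

lemma trace_tpow (A : Matrix (Fin d) (Fin d) ℂ) : (tpow A n).trace = A.trace ^ n := by
  simp only [trace, diag, tpow, of_apply, Finset.sum_pow', Fintype.piFinset_univ]

lemma Matrix.IsHermitian.tpow {A : Matrix (Fin d) (Fin d) ℂ} (hA : A.IsHermitian) :
    (tpow A n).IsHermitian := by
  rw [IsHermitian, conjTranspose_tpow, hA.eq]

lemma tpow_mul_conjTranspose_self {W : Matrix (Fin d) (Fin d) ℂ} (hW : W * Wᴴ = 1) :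
    tpow W n * (tpow W n)ᴴ = 1 := by
  rw [conjTranspose_tpow, tpow_mul, hW, tpow_one]

lemma tpow_mul_diagonal_mul_conjTranspose (W : Matrix (Fin d) (Fin d) ℂ) (w : Fin d → ℂ) :
    tpow (W * diagonal w * Wᴴ) n =
      tpow W n * diagonal (fun f => ∏ i, w (f i)) * (tpow W n)ᴴ := by
  rw [← tpow_mul, ← tpow_mul, tpow_diagonal, conjTranspose_tpow]

end TensorPower

lemma IsUnitaryMat.card_eq {p q : Type*} [Fintype p] [Fintype q] [DecidableEq p] [DecidableEq q]
    {U : Matrix p q ℂ} (hU : IsUnitaryMat U) : Fintype.card p = Fintype.card q := by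
  have h := trace_mul_comm U Uᴴ
  rw [hU.1, hU.2, trace_one, trace_one] at h
  exact_mod_cast h

lemma IsDensity.sum_eigenvalues_eq_one {m : Type*} [Fintype m] [DecidableEq m] {ρ : Matrix m m ℂ}
    (hρ : IsDensity ρ) : ∑ i, hρ.1.isHermitian.eigenvalues i = 1 := by
  have h := hρ.1.isHermitian.trace_eq_sum_eigenvalues.symm.trans hρ.2
  rw [← RCLike.ofReal_sum] at h
  exact RCLike.ofReal_injective (h.trans RCLike.ofReal_one.symm)

lemma Matrix.IsHermitian.vnEntropy_eq_sum_negMulLog {m : Type*} [Fintype m] [DecidableEq m]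
    {A : Matrix m m ℂ} (hA : A.IsHermitian) :
    vnEntropy A = (∑ i, Real.negMulLog (hA.eigenvalues i)) / Real.log 2 := by
  rw [vnEntropy, dif_pos hA, Finset.sum_div, ← Finset.sum_neg_distrib]
  exact Finset.sum_congr rfl fun i _ => by rw [Real.negMulLog, Real.logb]; ring

lemma exists_weights_of_isStarProjection {α β : Type*} [Fintype α] [DecidableEq α] [Fintype β]
    [DecidableEq β] {B : Matrix α β ℂ} (hB : B * Bᴴ = 1) {E : Matrix α α ℂ}
    (hE : IsStarProjection E) (q : β → ℝ) :
    ∃ c : β → ℝ, (∀ j, 0 ≤ c j) ∧ (∀ j, c j ≤ 1) ∧ ∑ j, c j = E.trace.re ∧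
      (B * diagonal (fun j => (q j : ℂ)) * Bᴴ * E).trace.re = ∑ j, c j * q j := by
  have hT := hE.conjTranspose_mul_mul hB
  refine ⟨fun j => ((Bᴴ * E * B) j j).re, hT.re_diag_nonneg, hT.re_diag_le_one, ?_, ?_⟩
  · rw [← Complex.re_sum]
    change (Bᴴ * E * B).trace.re = _
    rw [trace_mul_cycle, hB, Matrix.one_mul]
  · rw [trace_mul_diagonal_mul_conjTranspose_mul, Complex.re_sum]
    simp only [Complex.re_ofReal_mul, mul_comm]

lemma exists_weights_of_tpow_overlap {dA n p g : ℕ} {ρ : Matrix (Fin dA) (Fin dA) ℂ}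
    (hρ : IsDensity ρ) {U : Matrix (Fin p × Fin g) (Fin n → Fin dA) ℂ} (hU : IsUnitaryMat U)
    {v : Fin p → ℂ} (hv : star v ⬝ᵥ v = 1) :
    ∃ c : (Fin n → Fin dA) → ℝ, (∀ f, 0 ≤ c f) ∧ (∀ f, c f ≤ 1) ∧ ∑ f, c f = g ∧
      1 - traceNorm (ptraceSnd (U * tpow ρ n * Uᴴ) - proj v) / 2 ≤
        ∑ f, c f * ∏ i, hρ.1.isHermitian.eigenvalues (f i) := by
  set hA := hρ.1.isHermitian
  obtain ⟨B, hBdef⟩ : ∃ B, B = U * tpow (hA.eigenvectorUnitary : Matrix (Fin dA) (Fin dA) ℂ) n :=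
    ⟨_, rfl⟩
  have hB : B * Bᴴ = 1 := by
    rw [hBdef, conjTranspose_mul, Matrix.mul_assoc, ← Matrix.mul_assoc (tpow _ n),
      tpow_mul_conjTranspose_self hA.eigenvectorUnitary_mul_conjTranspose, Matrix.one_mul, hU.1]
  have hσ : U * tpow ρ n * Uᴴ =
      B * diagonal (fun f : Fin n → Fin dA => ((∏ i, hA.eigenvalues (f i) : ℝ) : ℂ)) * Bᴴ := by
    conv_lhs => rw [hA.eq_eigenvectorUnitary_mul_diagonal_mul, tpow_mul_diagonal_mul_conjTranspose]
    simp only [hBdef, conjTranspose_mul, Matrix.mul_assoc, Complex.ofReal_prod]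
  have hσtr : (U * tpow ρ n * Uᴴ).trace = 1 := by
    rw [trace_mul_cycle, hU.2, Matrix.one_mul, trace_tpow, hρ.2, one_pow]
  have hP := isStarProjection_proj hv
  obtain ⟨c, hc₀, hc₁, hcsum, htr⟩ := exists_weights_of_isStarProjection hB
    (hP.kronecker_one (k := Fin g)) fun f => ∏ i, hA.eigenvalues (f i)
  refine ⟨c, hc₀, hc₁, ?_, ?_⟩
  · simp [hcsum, trace_kronecker, trace_proj, hv]
  · rw [← htr, ← hσ]
    exact one_sub_traceNorm_div_two_le_re_trace_mul_kronecker_one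
      (isHermitian_mul_mul_conjTranspose U hA.tpow) hσtr hP ((trace_proj v).trans hv)

open Real in
lemma div_logb_le_of_log_le {n : ℕ} (hn : 0 < n) {x y H ε : ℝ}
    (h : log x ≤ n * (log y - H + ε * log y) + 1 / 4) :
    1 / n * logb 2 x ≤ logb 2 y - H / log 2 + 1 / (exp 1 * n) + ε * logb 2 y := by
  have hn' : (0 : ℝ) < n := by exact_mod_cast hn
  have hL : 0 < log 2 := log_pos one_lt_two
  have he : exp 1 ≤ 4 * log 2 := by
    have h₁ := exp_one_lt_d9
    have h₂ := log_two_gt_d9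
    norm_num at h₁ h₂
    linarith
  have hquarter : 1 / (4 * (n * log 2)) ≤ 1 / (exp 1 * n) :=
    one_div_le_one_div_of_le (by positivity) (by nlinarith)
  calc 1 / n * logb 2 x = log x / (n * log 2) := by rw [logb]; field_simp
    _ ≤ (n * (log y - H + ε * log y) + 1 / 4) / (n * log 2) := by gcongr
    _ = logb 2 y - H / log 2 + 1 / (4 * (n * log 2)) + ε * logb 2 y := by
        rw [logb]; field_simp; ring
    _ ≤ _ := by linarith

theorem purity_concentration_converse {dA n p g : ℕ} (hn : 0 < n)
    (ρ : Matrix (Fin dA) (Fin dA) ℂ) (hρ : IsDensity ρ) (ε : ℝ)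
    (U : Matrix (Fin p × Fin g) (Fin n → Fin dA) ℂ) (hU : IsUnitaryMat U)
    (v : Fin p → ℂ) (hv : star v ⬝ᵥ v = 1)
    (hclose : traceNorm (ptraceSnd (U * tpow ρ n * Uᴴ) - proj v) ≤ ε) :
    (1 / n : ℝ) * Real.logb 2 p ≤
      Real.logb 2 dA - vnEntropy ρ + 1 / (Real.exp 1 * n) + ε * Real.logb 2 dA := by
  obtain ⟨c, hc₀, hc₁, hcsum, hoverlap⟩ := exists_weights_of_tpow_overlap (n := n) hρ hU hv
  set lam := hρ.1.isHermitian.eigenvalues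
  have hlam₁ : ∑ i, lam i = 1 := hρ.sum_eigenvalues_eq_one
  have hcard : p * g = dA ^ n := by simpa using hU.card_eq
  have hfano := Real.sum_negMulLog_le_of_weights (by simpa using hcard.symm)
    (fun f => Finset.prod_nonneg fun i _ => hρ.1.eigenvalues_nonneg (f i))
    (Real.sum_prod_eq_one hlam₁ n) hc₀ hc₁ hcsum
  rw [Real.sum_negMulLog_prod hlam₁] at hfano
  have hdA : dA ≠ 0 := by
    rintro rfl
    simp at hlam₁
  obtain ⟨hp, hg⟩ : p ≠ 0 ∧ g ≠ 0 := by
    rw [← mul_ne_zero_iff, hcard]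
    exact pow_ne_zero n hdA
  have hlog : Real.log p + Real.log g = n * Real.log dA := by
    rw [← Real.log_mul (by positivity) (by positivity), ← Nat.cast_mul, hcard, Nat.cast_pow,
      Real.log_pow]
  have hε : 0 ≤ ε := (traceNorm_nonneg _).trans hclose
  have herr : 2 * (1 - ∑ f, c f * ∏ i, lam (f i)) ≤ ε := by linarith
  rw [hρ.1.isHermitian.vnEntropy_eq_sum_negMulLog]
  refine div_logb_le_of_log_le hn ?_
  linarith [mul_le_mul_of_nonneg_right herr (Real.log_natCast_nonneg p),
    mul_nonneg hε (Real.log_natCast_nonneg g), congrArg (ε * ·) hlog]
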